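/- arXiv:2102.02628 — 3 statements merged into one kernel-verified Lean document; each statement's English description precedes it below -/
import Mathlib

section
/- Let l ≥ 1 and N ≥ 1 be integers, and let (M_𝐢)_{𝐢 ∈ {1,…,N}^l} be a family of square-integrable real-valued random variables on a common probability space such that: (a) E[M_𝐢] = 0 for every l-tuple 𝐢; (b) E[M_𝐢²] ≤ K for every l-tuple 𝐢, for some constant K ≥ 0; (c) M_𝐢 and M_𝐣 are independent whenever the 2l indices i₁,…,i_l, j₁,…,j_l are pairwise distinct. Then E[( N^{-l} ∑_{𝐢 ∈ {1,…,N}^l} M_𝐢 )²] ≤ l(2l−1)·K/N. -/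
/-!
Expanding the square, `E[(∑ᵢ Mᵢ)²] = ∑_{i,j} E[Mᵢ Mⱼ]`. Every term is at most `K` by
`2ab ≤ a² + b²`, and the term of a pair `(i, j)` whose `2l` indices are pairwise distinct vanishes,
by independence and centering. Such pairs are exactly those for which the concatenated tuple
`Sum.elim i j : Fin l ⊕ Fin l → Fin N` is injective, and a map from a set of size `m` to one of
size `n` fails to be injective for at most `(m choose 2) n^(m-1)` of the `n^m` maps (union bound
over the colliding pair). With `m = 2l` this leaves at most `l(2l-1) N^(2l-1)` nonzero terms,
and the normalization `N^(-2l)` turns this into `l(2l-1)K/N`.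
-/

open Function Finset MeasureTheory ProbabilityTheory

theorem Nat.pow_le_descFactorial_add_choose_two_mul (n : ℕ) :
    ∀ m : ℕ, n ^ m ≤ n.descFactorial m + m.choose 2 * n ^ (m - 1)
  | 0 => by simp
  | m + 1 => by
    have ih := pow_le_descFactorial_add_choose_two_mul n m
    have hpow : m.choose 2 * n ^ (m - 1) * n ≤ m.choose 2 * n ^ m := by
      rcases m with _ | m
      · simp
      · rw [mul_assoc, ← pow_succ, Nat.add_sub_cancel]
    have hdesc : n.descFactorial m * n ≤ n.descFactorial (m + 1) + m * n ^ m := by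
      rw [Nat.descFactorial_succ]
      calc n.descFactorial m * n ≤ n.descFactorial m * (n - m + m) := by gcongr; omega
        _ = (n - m) * n.descFactorial m + m * n.descFactorial m := by ring
        _ ≤ _ := by gcongr; exact n.descFactorial_le_pow m
    rw [Nat.choose_succ_succ', Nat.choose_one_right, Nat.add_sub_cancel, pow_succ]
    nlinarith

theorem Fintype.card_filter_not_injective_le {ι α : Type*} [Fintype ι] [Fintype α]
    [DecidableEq ι] [DecidableEq α] :
    #{f : ι → α | ¬Injective f} ≤ (card ι).choose 2 * card α ^ (card ι - 1) := by
  have hinj : #{f : ι → α | Injective f} = (card α).descFactorial (card ι) := by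
    rw [← Fintype.card_embedding_eq, ← Fintype.card_subtype]
    exact Fintype.card_congr (Equiv.subtypeInjectiveEquivEmbedding ι α)
  have htotal := card_filter_add_card_filter_not (s := (univ : Finset (ι → α))) (Injective ·)
  rw [card_univ, Fintype.card_fun, hinj] at htotal
  have := Nat.pow_le_descFactorial_add_choose_two_mul (card α) (card ι)
  omega

theorem Fintype.card_filter_not_injective_sumElim_le {ι κ α : Type*} [Fintype ι] [Fintype κ]
    [Fintype α] [DecidableEq ι] [DecidableEq κ] [DecidableEq α] :
    #{p : (ι → α) × (κ → α) | ¬Injective (Sum.elim p.1 p.2)}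
      ≤ (card ι + card κ).choose 2 * card α ^ (card ι + card κ - 1) := by
  rw [← card_sum]
  refine le_of_eq_of_le ?_ card_filter_not_injective_le
  exact Finset.card_equiv (Equiv.sumArrowEquivProdArrow ι κ α).symm fun _ => by
    simp only [mem_filter, mem_univ, true_and]; rfl

section SecondMoment

variable {Ω : Type*} [MeasurableSpace Ω] {P : Measure Ω}

theorem integral_mul_le_of_integral_sq_le {f g : Ω → ℝ} {K : ℝ} (hf : MemLp f 2 P)
    (hg : MemLp g 2 P) (hfK : ∫ ω, f ω ^ 2 ∂P ≤ K) (hgK : ∫ ω, g ω ^ 2 ∂P ≤ K) :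
    ∫ ω, f ω * g ω ∂P ≤ K := by
  have hmono : ∫ ω, f ω * g ω ∂P ≤ ∫ ω, (f ω ^ 2 + g ω ^ 2) / 2 ∂P :=
    integral_mono (hf.integrable_mul hg) ((hf.integrable_sq.add hg.integrable_sq).div_const 2)
      fun ω => by nlinarith [sq_nonneg (f ω - g ω)]
  rw [integral_div, integral_add hf.integrable_sq hg.integrable_sq] at hmono
  linarith

theorem integral_sq_sum_eq_sum_integral_mul {ι : Type*} [Fintype ι] {X : ι → Ω → ℝ}
    (hX : ∀ i, MemLp (X i) 2 P) :
    ∫ ω, (∑ i, X i ω) ^ 2 ∂P = ∑ i, ∑ j, ∫ ω, X i ω * X j ω ∂P := by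
  have hint i j : Integrable (fun ω => X i ω * X j ω) P := (hX i).integrable_mul (hX j)
  simp_rw [sq, sum_mul_sum]
  rw [integral_finsetSum _ fun i _ => integrable_finsetSum _ fun j _ => hint i j]
  exact sum_congr rfl fun i _ => integral_finsetSum _ fun j _ => hint i j

theorem integral_sq_sum_le_card_mul {ι : Type*} [Fintype ι] {X : ι → Ω → ℝ} {K : ℝ}
    (D : ι → ι → Prop) [DecidableRel D] (hX : ∀ i, MemLp (X i) 2 P)
    (hK : ∀ i j, ∫ ω, X i ω * X j ω ∂P ≤ K)
    (hD : ∀ i j, ¬D i j → ∫ ω, X i ω * X j ω ∂P = 0) :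
    ∫ ω, (∑ i, X i ω) ^ 2 ∂P ≤ #{p : ι × ι | D p.1 p.2} * K := by
  rw [integral_sq_sum_eq_sum_integral_mul hX, ← Fintype.sum_prod_type', card_filter,
    Nat.cast_sum, sum_mul]
  gcongr with p
  split_ifs with h
  · simpa using hK p.1 p.2
  · simpa using (hD p.1 p.2 h).le

end SecondMoment

theorem inv_pow_sq_mul_choose_two_mul_pow (l N : ℕ) :
    ((N : ℝ) ^ l)⁻¹ ^ 2 * (((l + l).choose 2 * N ^ (l + l - 1) : ℕ) : ℝ)
      = l * (2 * l - 1) / N := by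
  obtain _ | k := l
  · simp
  obtain _ | N := N
  · simp
  rw [show k + 1 + (k + 1) - 1 = 2 * k + 1 by omega]
  push_cast [Nat.cast_choose_two]
  field_simp
  ring

theorem large_N_variance_bound_general
    {Ω : Type*} [MeasurableSpace Ω] (P : Measure Ω)
    (l N : ℕ)
    (M : (Fin l → Fin N) → Ω → ℝ) (K : ℝ) (hK : 0 ≤ K)
    (hL2 : ∀ i, MemLp (M i) 2 P)
    (hmean : ∀ i, ∫ ω, M i ω ∂P = 0)
    (hvar : ∀ i, ∫ ω, (M i ω) ^ 2 ∂P ≤ K)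
    (hindep : ∀ i j : Fin l → Fin N,
      Function.Injective i → Function.Injective j →
      (∀ a b : Fin l, i a ≠ j b) →
      IndepFun (M i) (M j) P) :
    ∫ ω, (((N : ℝ) ^ l)⁻¹ * ∑ i : Fin l → Fin N, M i ω) ^ 2 ∂P
      ≤ (l : ℝ) * (2 * l - 1) * K / N := by
  classical
  have hcov_le i j : ∫ ω, M i ω * M j ω ∂P ≤ K :=
    integral_mul_le_of_integral_sq_le (hL2 i) (hL2 j) (hvar i) (hvar j)
  have hcov_eq_zero i j (hij : Injective (Sum.elim i j)) : ∫ ω, M i ω * M j ω ∂P = 0 := by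
    obtain ⟨hi, hj, hdisj⟩ := Sum.elim_injective.mp hij
    rw [(hindep i j hi hj hdisj).integral_fun_mul_eq_mul_integral (hL2 i).aestronglyMeasurable
      (hL2 j).aestronglyMeasurable, hmean i, zero_mul]
  have hsum := integral_sq_sum_le_card_mul _ hL2 hcov_le
    fun i j hij => hcov_eq_zero i j (not_not.mp hij)
  have hcard := Fintype.card_filter_not_injective_sumElim_le (ι := Fin l) (κ := Fin l)
    (α := Fin N)
  simp only [Fintype.card_fin] at hcard
  calc ∫ ω, (((N : ℝ) ^ l)⁻¹ * ∑ i, M i ω) ^ 2 ∂P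
      = ((N : ℝ) ^ l)⁻¹ ^ 2 * ∫ ω, (∑ i, M i ω) ^ 2 ∂P := by
        simp_rw [mul_pow]; exact integral_const_mul _ _
    _ ≤ ((N : ℝ) ^ l)⁻¹ ^ 2 * (((l + l).choose 2 * N ^ (l + l - 1) : ℕ) * K) := by
        gcongr
        exact hsum.trans (mul_le_mul_of_nonneg_right (by exact_mod_cast hcard) hK)
    _ = l * (2 * l - 1) * K / N := by
        rw [← mul_assoc, inv_pow_sq_mul_choose_two_mul_pow]; ring

/-- Variance-type bound for averages of weakly dependent arrays:
if `(M i)` for `i : {1,…,N}^l` are mean-zero square-integrable random variables with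
second moment bounded by `K`, such that `M i` and `M j` are independent whenever the
`2l` indices of `i` and `j` are pairwise distinct, then
`E[(N^{-l} ∑ i, M i)²] ≤ l(2l−1)K/N`. -/
theorem large_N_variance_bound
    {Ω : Type*} [MeasurableSpace Ω] (P : Measure Ω) [IsProbabilityMeasure P]
    (l N : ℕ) (hl : 1 ≤ l) (hN : 1 ≤ N)
    (M : (Fin l → Fin N) → Ω → ℝ) (K : ℝ) (hK : 0 ≤ K)
    (hL2 : ∀ i, MemLp (M i) 2 P)
    (hmean : ∀ i, ∫ ω, M i ω ∂P = 0)
    (hvar : ∀ i, ∫ ω, (M i ω) ^ 2 ∂P ≤ K)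
    (hindep : ∀ i j : Fin l → Fin N,
      Function.Injective i → Function.Injective j →
      (∀ a b : Fin l, i a ≠ j b) →
      IndepFun (M i) (M j) P) :
    ∫ ω, (((N : ℝ) ^ l)⁻¹ * ∑ i : Fin l → Fin N, M i ω) ^ 2 ∂P
      ≤ (l : ℝ) * (2 * l - 1) * K / N :=
  large_N_variance_bound_general P l N M K hK hL2 hmean hvar hindep
end

section
/- Let H be a real Hilbert space, N ≥ 1 an integer, and let (V_{l,j,i})_{l,j,i ∈ {1,…,N}} be H-valued Bochner square-integrable random variables on a common probability space such that E‖V_{l,j,i}‖_H² ≤ K for all l, j, i, and E⟨V_{l₁,j,i}, V_{l₂,j,i}⟩_H = 0 whenever l₁ ≠ l₂, l₁ ∉ {i, j} and l₂ ∉ {i, j}. Then (1/N³) ∑_{i=1}^N ∑_{j=1}^N E‖∑_{l=1}^N V_{l,j,i}‖_H² ≤ 5K. -/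
/-!
Expanding `‖∑ₗ V_{l,j,i}‖²` turns each summand into the sum of the `N²` correlations
`E⟪V_{l₁,j,i}, V_{l₂,j,i}⟫`, each at most `K` by Cauchy–Schwarz and AM–GM. All of them vanish
except the `N` diagonal ones and the at most `4N` with `l₁` or `l₂` in `{i, j}`, so every
summand is at most `5NK`.
-/

open MeasureTheory Finset
open scoped RealInnerProductSpace

section CorrelationBound

variable {ι : Type*} [Fintype ι] [DecidableEq ι]

theorem sum_sum_le_of_eq_zero_off_diag_outside (G : ι → ι → ℝ) (S : Finset ι) {K : ℝ}
    (hK : 0 ≤ K) (hG : ∀ a b, G a b ≤ K)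
    (hzero : ∀ a b, a ≠ b → a ∉ S → b ∉ S → G a b = 0) :
    ∑ a, ∑ b, G a b ≤ (2 * #S + 1) * Fintype.card ι * K := by
  calc ∑ a, ∑ b, G a b
      ≤ ∑ a, ∑ b, ((if a = b then K else 0) + (if a ∈ S then K else 0)
          + (if b ∈ S then K else 0)) := by
        refine sum_le_sum fun a _ => sum_le_sum fun b _ => ?_
        split_ifs <;> first | linarith [hG a b] | (rw [hzero a b ‹_› ‹_› ‹_›]; norm_num)
    _ = (2 * #S + 1) * Fintype.card ι * K := by
        simp only [sum_add_distrib, sum_ite_eq, mem_univ, ↓reduceIte, sum_const, card_univ,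
          nsmul_eq_mul, sum_ite_mem, univ_inter, ← mul_sum]
        ring

end CorrelationBound

section SquareIntegrable

variable {Ω : Type*} [MeasurableSpace Ω] {P : Measure Ω}
  {H : Type*} [NormedAddCommGroup H] [InnerProductSpace ℝ H]

theorem MeasureTheory.MemLp.integrable_inner {f g : Ω → H} (hf : MemLp f 2 P)
    (hg : MemLp g 2 P) :
    Integrable (fun ω => ⟪f ω, g ω⟫) P :=
  (L2.integrable_inner (𝕜 := ℝ) (hf.toLp f) (hg.toLp g)).congr <| by
    filter_upwards [hf.coeFn_toLp, hg.coeFn_toLp] with ω hfω hgω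
    rw [hfω, hgω]

theorem integral_inner_le_of_memLp {f g : Ω → H} (hf : MemLp f 2 P) (hg : MemLp g 2 P) :
    ∫ ω, ⟪f ω, g ω⟫ ∂P ≤ (∫ ω, ‖f ω‖ ^ 2 ∂P + ∫ ω, ‖g ω‖ ^ 2 ∂P) / 2 := by
  have hf2 := (memLp_two_iff_integrable_sq_norm hf.1).1 hf
  have hg2 := (memLp_two_iff_integrable_sq_norm hg.1).1 hg
  rw [← integral_add hf2 hg2, ← integral_div]
  refine integral_mono (hf.integrable_inner hg) ((hf2.add hg2).div_const 2) fun ω => ?_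
  have := norm_sub_sq_real (f ω) (g ω)
  linarith [sq_nonneg ‖f ω - g ω‖]

theorem integral_norm_sum_sq_eq {ι : Type*} (s : Finset ι) {f : ι → Ω → H}
    (hf : ∀ l ∈ s, MemLp (f l) 2 P) :
    ∫ ω, ‖∑ l ∈ s, f l ω‖ ^ 2 ∂P = ∑ l₁ ∈ s, ∑ l₂ ∈ s, ∫ ω, ⟪f l₁ ω, f l₂ ω⟫ ∂P := by
  simp_rw [← real_inner_self_eq_norm_sq, sum_inner, inner_sum]
  rw [integral_finsetSum _ fun l₁ h₁ =>
    integrable_finsetSum _ fun l₂ h₂ => (hf l₁ h₁).integrable_inner (hf l₂ h₂)]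
  exact sum_congr rfl fun l₁ h₁ =>
    integral_finsetSum _ fun l₂ h₂ => (hf l₁ h₁).integrable_inner (hf l₂ h₂)

end SquareIntegrable

theorem averaged_norm_sq_bound_three_indices_general
    {Ω : Type*} [MeasurableSpace Ω] (P : Measure Ω)
    {H : Type*} [NormedAddCommGroup H] [InnerProductSpace ℝ H]
    (N : ℕ) (hN : 1 ≤ N) (V : Fin N → Fin N → Fin N → Ω → H) (K : ℝ)
    (hL2 : ∀ l j i, MemLp (V l j i) 2 P)
    (hbound : ∀ l j i, ∫ ω, ‖V l j i ω‖ ^ 2 ∂P ≤ K)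
    (horth : ∀ l₁ l₂ j i : Fin N, l₁ ≠ l₂ → l₁ ≠ i → l₁ ≠ j → l₂ ≠ i → l₂ ≠ j →
      ∫ ω, ⟪V l₁ j i ω, V l₂ j i ω⟫ ∂P = 0) :
    (1 / (N : ℝ) ^ 3) * ∑ i, ∑ j, ∫ ω, ‖∑ l, V l j i ω‖ ^ 2 ∂P ≤ 5 * K := by
  have hK : 0 ≤ K :=
    (integral_nonneg fun _ => sq_nonneg _).trans (hbound ⟨0, hN⟩ ⟨0, hN⟩ ⟨0, hN⟩)
  have hsummand : ∀ j i, ∫ ω, ‖∑ l, V l j i ω‖ ^ 2 ∂P ≤ 5 * N * K := by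
    intro j i
    rw [integral_norm_sum_sq_eq _ fun l _ => hL2 l j i]
    calc _ ≤ (2 * #{i, j} + 1) * Fintype.card (Fin N) * K :=
          sum_sum_le_of_eq_zero_off_diag_outside _ {i, j} hK
            (fun l₁ l₂ => (integral_inner_le_of_memLp (hL2 l₁ j i) (hL2 l₂ j i)).trans
              (by linarith [hbound l₁ j i, hbound l₂ j i]))
            (fun l₁ l₂ h h₁ h₂ => by
              simp only [mem_insert, mem_singleton, not_or] at h₁ h₂
              exact horth l₁ l₂ j i h h₁.1 h₁.2 h₂.1 h₂.2)
      _ ≤ 5 * N * K := by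
          have : (#{i, j} : ℝ) ≤ 2 := by exact_mod_cast card_le_two
          rw [Fintype.card_fin]
          gcongr
          linarith
  have hN_pos : (0 : ℝ) < N := by exact_mod_cast hN
  calc (1 / (N : ℝ) ^ 3) * ∑ i, ∑ j, ∫ ω, ‖∑ l, V l j i ω‖ ^ 2 ∂P
      ≤ (1 / (N : ℝ) ^ 3) * ∑ _i : Fin N, ∑ _j : Fin N, 5 * N * K := by
        gcongr with i _ j _
        exact hsummand j i
    _ = 5 * K := by
        simp only [sum_const, card_univ, Fintype.card_fin, nsmul_eq_mul]
        field_simp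

/-- If `E‖V_{l,j,i}‖² ≤ K` for all `l,j,i` and
`E⟪V_{l₁,j,i}, V_{l₂,j,i}⟫ = 0` whenever `l₁ ≠ l₂` and `l₁, l₂ ∉ {i, j}`, then
`N⁻³ ∑ᵢ ∑ⱼ E‖∑ₗ V_{l,j,i}‖² ≤ 5K`. -/
theorem averaged_norm_sq_bound_three_indices
    {Ω : Type*} [MeasurableSpace Ω] (P : Measure Ω) [IsProbabilityMeasure P]
    {H : Type*} [NormedAddCommGroup H] [InnerProductSpace ℝ H] [CompleteSpace H]
    (N : ℕ) (hN : 1 ≤ N) (V : Fin N → Fin N → Fin N → Ω → H) (K : ℝ)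
    (hL2 : ∀ l j i, MemLp (V l j i) 2 P)
    (hbound : ∀ l j i, ∫ ω, ‖V l j i ω‖ ^ 2 ∂P ≤ K)
    (horth : ∀ l₁ l₂ j i : Fin N, l₁ ≠ l₂ → l₁ ≠ i → l₁ ≠ j → l₂ ≠ i → l₂ ≠ j →
      ∫ ω, ⟪V l₁ j i ω, V l₂ j i ω⟫ ∂P = 0) :
    (1 / (N : ℝ) ^ 3) * ∑ i, ∑ j, ∫ ω, ‖∑ l, V l j i ω‖ ^ 2 ∂P ≤ 5 * K :=
  averaged_norm_sq_bound_three_indices_general P N hN V K hL2 hbound horth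
end

section
/- Let λ > 0, T > 0, γ ∈ (0, 1], and let g : [0,T] → ℝ be a bounded measurable function. Then the function F(t) = ∫₀ᵗ e^{−λ(t−s)} g(s) ds satisfies, for all 0 ≤ s ≤ t ≤ T, the Hölder bound |F(t) − F(s)| ≤ 2 (t−s)^γ λ^{γ−1} · sup_{r ∈ [0,T]} |g(r)|. -/
/-!
Splitting the integral at `s` gives `F t - F s = (e^{-λ(t-s)} - 1) F s + ∫ₛᵗ e^{-λ(t-r)} g r dr`.
With `M = sup |g|`, the first term is at most `(1 - e^{-λ(t-s)}) · M/λ` because `|F s| ≤ M/λ`,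
and the second term is bounded by the same quantity. Finally
`(1 - e^{-λx})/λ ≤ min x (1/λ) ≤ x^γ λ^{γ-1}`, the last step being the fact that a weighted
geometric mean dominates the minimum.
-/

open MeasureTheory Set Real

/-- The Duhamel integral `F(t) = ∫₀ᵗ e^{−λ(t−s)} g(s) ds`. -/
noncomputable def duhamel (lam : ℝ) (g : ℝ → ℝ) (t : ℝ) : ℝ :=
  ∫ s in (0:ℝ)..t, Real.exp (-lam * (t - s)) * g s

lemma min_le_rpow_mul_rpow {a b γ : ℝ} (ha : 0 ≤ a) (hb : 0 ≤ b) (hγ0 : 0 ≤ γ) (hγ1 : γ ≤ 1) :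
    min a b ≤ a ^ γ * b ^ (1 - γ) :=
  calc min a b = min a b ^ γ * min a b ^ (1 - γ) := by
        rw [← rpow_add' (le_min ha hb) (by norm_num), add_sub_cancel, rpow_one]
    _ ≤ a ^ γ * b ^ (1 - γ) := by
        have hmin : 0 ≤ min a b := le_min ha hb
        gcongr
        exacts [min_le_left a b, min_le_right a b]

lemma one_sub_exp_neg_mul_div_le {lam x γ : ℝ} (hlam : 0 < lam) (hx : 0 ≤ x) (hγ0 : 0 ≤ γ)
    (hγ1 : γ ≤ 1) : (1 - exp (-lam * x)) / lam ≤ x ^ γ * lam ^ (γ - 1) := by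
  have hexp : 1 - exp (-lam * x) ≤ min (lam * x) 1 :=
    le_min (by linarith [add_one_le_exp (-lam * x)]) (by linarith [exp_pos (-lam * x)])
  calc (1 - exp (-lam * x)) / lam ≤ min (lam * x) 1 / lam := by gcongr
    _ = min x (1 / lam) := by
        rw [← min_div_div_right hlam.le, mul_div_cancel_left₀ _ hlam.ne']
    _ ≤ x ^ γ * (1 / lam) ^ (1 - γ) := min_le_rpow_mul_rpow hx (by positivity) hγ0 hγ1
    _ = x ^ γ * lam ^ (γ - 1) := by
        rw [one_div, inv_rpow hlam.le, ← rpow_neg hlam.le, neg_sub]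

lemma integral_exp_neg_mul_sub (lam c a b : ℝ) (hlam : lam ≠ 0) :
    ∫ r in a..b, exp (-lam * (c - r)) = (exp (-lam * (c - b)) - exp (-lam * (c - a))) / lam := by
  have hderiv : ∀ x ∈ uIcc a b,
      HasDerivAt (fun r => exp (-lam * (c - r)) / lam) (exp (-lam * (c - x))) x := by
    intro x _
    refine (((hasDerivAt_id' x).const_sub c).const_mul (-lam)).exp.div_const lam |>.congr_deriv ?_
    field_simp
  rw [intervalIntegral.integral_eq_sub_of_hasDerivAt hderiv
    ((by fun_prop : Continuous fun r => exp (-lam * (c - r))).intervalIntegrable a b)]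
  ring

section Duhamel

variable {lam M s t : ℝ} {g : ℝ → ℝ}

lemma abs_integral_exp_mul_le (hlam : lam ≠ 0) (hst : s ≤ t) (hg : ∀ r ∈ Icc s t, |g r| ≤ M) :
    |∫ r in s..t, exp (-lam * (t - r)) * g r| ≤ (1 - exp (-lam * (t - s))) / lam * M := by
  have hbound : ∀ᵐ r, r ∈ Ioc s t → ‖exp (-lam * (t - r)) * g r‖ ≤ exp (-lam * (t - r)) * M :=
    Filter.Eventually.of_forall fun r hr => by
      rw [norm_mul, norm_of_nonneg (exp_pos _).le]
      exact mul_le_mul_of_nonneg_left (hg r (Ioc_subset_Icc_self hr)) (exp_pos _).le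
  calc |∫ r in s..t, exp (-lam * (t - r)) * g r|
      ≤ ∫ r in s..t, exp (-lam * (t - r)) * M :=
        intervalIntegral.norm_integral_le_of_norm_le hst hbound
          ((by fun_prop : Continuous fun r => exp (-lam * (t - r)) * M).intervalIntegrable s t)
    _ = (1 - exp (-lam * (t - s))) / lam * M := by
        rw [intervalIntegral.integral_mul_const, integral_exp_neg_mul_sub lam t s t hlam,
          sub_self, mul_zero, exp_zero]

lemma abs_duhamel_le (hlam : 0 < lam) (ht : 0 ≤ t) (hg : ∀ r ∈ Icc 0 t, |g r| ≤ M) :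
    |duhamel lam g t| ≤ M / lam := by
  have hM : 0 ≤ M := (abs_nonneg _).trans (hg 0 ⟨le_rfl, ht⟩)
  calc |duhamel lam g t| ≤ (1 - exp (-lam * (t - 0))) / lam * M :=
        abs_integral_exp_mul_le hlam.ne' ht hg
    _ ≤ 1 / lam * M := by gcongr; linarith [exp_pos (-lam * (t - 0))]
    _ = M / lam := by ring

lemma duhamel_eq_exp_mul_add (hg₀ : IntervalIntegrable g volume 0 s)
    (hg₁ : IntervalIntegrable g volume s t) :
    duhamel lam g t =
      exp (-lam * (t - s)) * duhamel lam g s + ∫ r in s..t, exp (-lam * (t - r)) * g r := by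
  have hkernel : Continuous fun r => exp (-lam * (t - r)) := by fun_prop
  rw [duhamel, ← intervalIntegral.integral_add_adjacent_intervals
    (hg₀.continuousOn_mul hkernel.continuousOn) (hg₁.continuousOn_mul hkernel.continuousOn),
    duhamel, ← intervalIntegral.integral_const_mul]
  congr 1
  refine intervalIntegral.integral_congr fun r _ => ?_
  rw [← mul_assoc, ← exp_add]
  congr 2
  ring

lemma abs_duhamel_sub_le (hlam : 0 < lam) (hs : 0 ≤ s) (hst : s ≤ t)
    (hgi : IntervalIntegrable g volume 0 t) (hg : ∀ r ∈ Icc 0 t, |g r| ≤ M) :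
    |duhamel lam g t - duhamel lam g s| ≤ 2 * ((1 - exp (-lam * (t - s))) / lam * M) := by
  have hdecay : 0 ≤ 1 - exp (-lam * (t - s)) := by
    rw [sub_nonneg, exp_le_one_iff]; nlinarith
  have hFs : |duhamel lam g s| ≤ M / lam :=
    abs_duhamel_le hlam hs fun r hr => hg r ⟨hr.1, hr.2.trans hst⟩
  have htail := abs_integral_exp_mul_le hlam.ne' hst fun r hr => hg r ⟨hs.trans hr.1, hr.2⟩
  have hsplit : duhamel lam g t - duhamel lam g s =
      -((1 - exp (-lam * (t - s))) * duhamel lam g s)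
        + ∫ r in s..t, exp (-lam * (t - r)) * g r := by
    have hsmem : s ∈ uIcc 0 t := mem_uIcc_of_le hs hst
    rw [duhamel_eq_exp_mul_add (hgi.mono_set (uIcc_subset_uIcc_left hsmem))
      (hgi.mono_set (uIcc_subset_uIcc_right hsmem))]
    ring
  calc |duhamel lam g t - duhamel lam g s|
      ≤ (1 - exp (-lam * (t - s))) * |duhamel lam g s|
          + |∫ r in s..t, exp (-lam * (t - r)) * g r| := by
        rw [hsplit]
        refine (abs_add_le _ _).trans_eq ?_
        rw [abs_neg, abs_mul, abs_of_nonneg hdecay]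
    _ ≤ (1 - exp (-lam * (t - s))) * (M / lam) + (1 - exp (-lam * (t - s))) / lam * M := by
        gcongr
    _ = 2 * ((1 - exp (-lam * (t - s))) / lam * M) := by ring

end Duhamel

theorem duhamel_holder_bound_general (lam T γ : ℝ) (hlam : 0 < lam)
    (hγ : γ ∈ Set.Ioc (0:ℝ) 1) (g : ℝ → ℝ) (hmeas : Measurable g)
    (hbdd : ∃ B : ℝ, ∀ r ∈ Set.Icc (0:ℝ) T, |g r| ≤ B)
    (s t : ℝ) (hs : 0 ≤ s) (hst : s ≤ t) (htT : t ≤ T) :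
    |duhamel lam g t - duhamel lam g s|
      ≤ 2 * (t - s) ^ γ * lam ^ (γ - 1) * ⨆ r : Set.Icc (0:ℝ) T, |g (r : ℝ)| := by
  obtain ⟨B, hB⟩ := hbdd
  set M := ⨆ r : Icc (0:ℝ) T, |g (r : ℝ)|
  have hgM : ∀ r ∈ Icc 0 t, |g r| ≤ M := fun r hr =>
    le_ciSup (f := fun r : Icc (0:ℝ) T => |g r|) ⟨B, by rintro _ ⟨r, rfl⟩; exact hB r r.2⟩
      ⟨r, hr.1, hr.2.trans htT⟩
  have hM : 0 ≤ M := (abs_nonneg _).trans (hgM 0 ⟨le_rfl, hs.trans hst⟩)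
  have hgi : IntervalIntegrable g volume 0 t :=
    (intervalIntegrable_iff_integrableOn_Icc_of_le (hs.trans hst)).mpr <|
      IntegrableOn.of_bound measure_Icc_lt_top hmeas.aestronglyMeasurable M <|
        (ae_restrict_mem measurableSet_Icc).mono hgM
  calc |duhamel lam g t - duhamel lam g s|
      ≤ 2 * ((1 - exp (-lam * (t - s))) / lam * M) := abs_duhamel_sub_le hlam hs hst hgi hgM
    _ ≤ 2 * ((t - s) ^ γ * lam ^ (γ - 1) * M) := by
        gcongr
        exact one_sub_exp_neg_mul_div_le hlam (sub_nonneg.mpr hst) hγ.1.le hγ.2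
    _ = 2 * (t - s) ^ γ * lam ^ (γ - 1) * M := by ring

/-- For `λ > 0`, `T > 0`, `γ ∈ (0,1]` and bounded measurable
`g : [0,T] → ℝ`, the Duhamel integral `F(t) = ∫₀ᵗ e^{−λ(t−s)} g(s) ds` satisfies the
Hölder bound `|F(t) − F(s)| ≤ 2 (t−s)^γ λ^{γ−1} sup_{r∈[0,T]} |g(r)|` for
`0 ≤ s ≤ t ≤ T`. -/
theorem duhamel_holder_bound (lam T γ : ℝ) (hlam : 0 < lam) (hT : 0 < T)
    (hγ : γ ∈ Set.Ioc (0:ℝ) 1) (g : ℝ → ℝ) (hmeas : Measurable g)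
    (hbdd : ∃ B : ℝ, ∀ r ∈ Set.Icc (0:ℝ) T, |g r| ≤ B)
    (s t : ℝ) (hs : 0 ≤ s) (hst : s ≤ t) (htT : t ≤ T) :
    |duhamel lam g t - duhamel lam g s|
      ≤ 2 * (t - s) ^ γ * lam ^ (γ - 1) * ⨆ r : Set.Icc (0:ℝ) T, |g (r : ℝ)| :=
  duhamel_holder_bound_general lam T γ hlam hγ g hmeas hbdd s t hs hst htT
end
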